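/- The map Θ : Z × Γ → Ultrafilter X × Ultrafilter X defined by Θ(η, g) = (η, σ̄(g)(η)) is injective, and for every n ∈ ℕ its restriction to Z × {g ∈ Γ : |g|_S ≤ n} (where Z carries the subspace topology from Ultrafilter X and {g : |g|_S ≤ n} the discrete topology) is a homeomorphism onto cl(E_n) ∩ (Z × Z) with its subspace topology. -/

import Mathlib

open scoped BigOperators symmDiff Classical

universe u v

/-- A sofic approximation of a group `Γ` generated by a finite symmetric set `S`. -/
structure SoficApprox (Γ : Type u) [Group Γ] (S : Finset Γ) where
  F : ℕ → Finset Γ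
  F_mono : Monotone F
  F_one : ∀ i, (1 : Γ) ∈ F i
  F_exhausts : ∀ g : Γ, ∃ i, g ∈ F i
  eps : ℕ → ℝ
  eps_pos : ∀ i, 0 < eps i
  eps_lim : Filter.Tendsto eps Filter.atTop (nhds 0)
  X : ℕ → Type
  finX : ∀ i, Finite (X i)
  neX : ∀ i, Nonempty (X i)
  sigma : (i : ℕ) → Γ → Equiv.Perm (X i)
  Y : (i : ℕ) → Set (X i)
  Y_large : ∀ i, (1 - eps i) * (Nat.card (X i) : ℝ) ≤ ((Y i).ncard : ℝ)
  sigma_mul : ∀ i, ∀ g ∈ F i, ∀ h ∈ F i, ∀ y ∈ Y i, sigma i g (sigma i h y) = sigma i (g * h) y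
  sigma_free : ∀ i, ∀ g ∈ F i, g ≠ 1 → ∀ y ∈ Y i, sigma i g y ≠ y

namespace SoficApprox

variable {Γ : Type u} [Group Γ] {S : Finset Γ}

/-- The total space (space of graphs) `X = ⨆ i, X i`. -/
abbrev Total (A : SoficApprox Γ S) : Type := Σ i, A.X i

/-- The bijection `σ(g)` of the total space acting as `σ_i(g)` on each `X i`. -/
def perm (A : SoficApprox Γ S) (g : Γ) : Equiv.Perm A.Total :=
  Equiv.sigmaCongrRight fun i => A.sigma i g

/-- The continuous extension `σ̄(g)` of `σ(g)` to the Stone–Čech compactification. -/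
def permBar (A : SoficApprox Γ S) (g : Γ) : Ultrafilter A.Total → Ultrafilter A.Total :=
  Ultrafilter.map (A.perm g)

/-- The union `Y = ⨆ i, Y i` inside the total space. -/
def Ytot (A : SoficApprox Γ S) : Set A.Total := {p | p.2 ∈ A.Y p.1}

/-- `∂Y`: free ultrafilters containing `Y`. -/
def bdY (A : SoficApprox Γ S) : Set (Ultrafilter A.Total) :=
  {η | (∀ p : A.Total, η ≠ pure p) ∧ A.Ytot ∈ η}

/-- The core `Z = ⋂_{g ∈ Γ} σ̄(g)''(∂Y)` of the sofic boundary. -/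
def core (A : SoficApprox Γ S) : Set (Ultrafilter A.Total) :=
  ⋂ g : Γ, A.permBar g '' A.bdY

/-- The `S`-labelled graph structure on `X i`, with edges `{x, σ_i(s)(x)}` for `s ∈ S`. -/
def graph (A : SoficApprox Γ S) (i : ℕ) : SimpleGraph (A.X i) where
  Adj x y := x ≠ y ∧ ∃ s ∈ S, A.sigma i s x = y ∨ A.sigma i s y = x
  symm := ⟨fun x y h => ⟨h.1.symm, by obtain ⟨s, hs, h'⟩ := h.2; exact ⟨s, hs, h'.symm⟩⟩⟩
  loopless := ⟨fun x h => h.1 rfl⟩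

/-- An admissible metric on the total space: a metric restricting to the edge-path
metric on each `X i` and with distances between distinct components tending to `∞`. -/
def Admissible (A : SoficApprox Γ S) (d : A.Total → A.Total → ℝ) : Prop :=
  (∀ p q, d p q = d q p) ∧
  (∀ p q r, d p r ≤ d p q + d q r) ∧
  (∀ p q, d p q = 0 ↔ p = q) ∧
  (∀ p q, 0 ≤ d p q) ∧
  (∀ (i : ℕ) (x y : A.X i), d ⟨i, x⟩ ⟨i, y⟩ = ((A.graph i).dist x y : ℝ)) ∧
  (∀ R : ℝ, ∃ N : ℕ, ∀ i j : ℕ, i ≠ j → N ≤ i + j →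
      ∀ (x : A.X i) (y : A.X j), R < d ⟨i, x⟩ ⟨j, y⟩)

/-- The entourage `E_R` viewed inside `βX × βX`. -/
def ER (A : SoficApprox Γ S) (d : A.Total → A.Total → ℝ) (R : ℝ) :
    Set (Ultrafilter A.Total × Ultrafilter A.Total) :=
  {p | ∃ a b : A.Total, d a b ≤ R ∧ p = (pure a, pure b)}

end SoficApprox

/-- Word length of `g` with respect to the generating set `S`. -/
noncomputable def wordLength {Γ : Type u} [Group Γ] (S : Finset Γ) (g : Γ) : ℕ :=
  sInf {n | ∃ l : List Γ, (∀ x ∈ l, x ∈ S) ∧ l.length = n ∧ l.prod = g}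

/-- Word length of an element of a free group. -/
noncomputable def fgLength {α : Type v} (w : FreeGroup α) : ℕ :=
  sInf {n | ∃ l : List (α × Bool), l.length = n ∧ FreeGroup.mk l = w}

/-- The canonical homomorphism `F_S → Γ` extending the inclusion `S ↪ Γ`. -/
noncomputable def pihom {Γ : Type u} [Group Γ] (S : Finset Γ) : FreeGroup ↥S →* Γ :=
  FreeGroup.lift fun s => (s : Γ)

/-- The homomorphism `τ : F_S → Sym(X)` with `τ(s) = σ(s)` for `s ∈ S`. -/
noncomputable def SoficApprox.tau {Γ : Type u} [Group Γ] {S : Finset Γ}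
    (A : SoficApprox Γ S) : FreeGroup ↥S →* Equiv.Perm A.Total :=
  FreeGroup.lift fun s => A.perm (s : Γ)

/-! The core consists of free ultrafilters concentrated on `Y`, and there the approximate action
becomes an honest free action: `σ̄(g) σ̄(h) = σ̄(gh)` because eventually `g, h ∈ F i`, and
`σ̄(g) η ≠ η` for `g ≠ 1` because the fixed-point-free permutations `σ_i(g)` can be 3-coloured.
Points at distance `≤ n` in one `X i` are joined by a word of length `≤ n` in the permutations
`σ(s)^{±1}`, and distinct components are eventually far apart, so away from finitely many
principal pairs `cl(E_n)` lies in the union of the graphs of the maps `σ̄_w` of the finitely many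
words `w` of length `≤ n`, and on the core `σ̄_w = σ̄(w)`. Thus `Θ` is a continuous bijection from
the compact space `Z × {g : |g|_S ≤ n}` onto the Hausdorff space `cl(E_n) ∩ (Z × Z)`. -/

namespace Ultrafilter

variable {α β : Type*}

theorem continuous_map (f : α → β) : Continuous (Ultrafilter.map f) :=
  ultrafilterBasis_is_basis.continuous_iff.2 <| by
    rintro _ ⟨s, rfl⟩
    exact ultrafilter_isOpen_basic (f ⁻¹' s)

theorem map_congr {η : Ultrafilter α} {f g : α → β} (h : f =ᶠ[η] g) : η.map f = η.map g :=
  coe_injective <| by simpa only [coe_map] using Filter.map_congr h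

theorem eq_pure_iff_singleton_mem {η : Ultrafilter α} {a : α} : η = pure a ↔ {a} ∈ η := by
  rw [← coe_inj, coe_pure]
  exact Filter.NeBot.eq_pure_iff inferInstance

theorem prodMk_map_mem_closure_range (η : Ultrafilter α) (f : α → β) :
    (η, η.map f) ∈
      closure (Set.range fun a => ((pure a : Ultrafilter α), (pure (f a) : Ultrafilter β))) :=
  mem_closure_of_tendsto
    ((tendsto_pure_self η).prodMk_nhds ((tendsto_pure_self (η.map f)).comp Filter.tendsto_map))
    (Filter.Eventually.of_forall fun a => ⟨a, rfl⟩)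

theorem map_ne_self_of_coloring {κ : Type*} [Finite κ] {η : Ultrafilter α} {f : α → α}
    (c : α → κ) (hc : ∀ᶠ a in η, c (f a) ≠ c a) : η.map f ≠ η := by
  intro hfix
  obtain ⟨k, hk⟩ := (η.map c).eq_pure_of_finite
  have hck : c ⁻¹' {k} ∈ η := mem_map.1 (hk ▸ rfl : {k} ∈ η.map c)
  have hfck : f ⁻¹' (c ⁻¹' {k}) ∈ η := mem_map.1 (hfix.symm ▸ hck : c ⁻¹' {k} ∈ η.map f)
  obtain ⟨a, ha, hfa, hcol⟩ := nonempty_of_mem (Filter.inter_mem hck (Filter.inter_mem hfck hc))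
  exact hcol (hfa.trans ha.symm)

end Ultrafilter

theorem Equiv.Perm.exists_coloring_fin_three {β : Type*} [Finite β] (f : Equiv.Perm β) :
    ∃ c : β → Fin 3, ∀ x, f x ≠ x → c (f x) ≠ c x := by
  classical
  have : Fintype β := Fintype.ofFinite _
  suffices h : ∀ s : Finset β, ∃ c : β → Fin 3, ∀ x ∈ s, f x ∈ s → f x ≠ x → c (f x) ≠ c x by
    obtain ⟨c, hc⟩ := h Finset.univ
    exact ⟨c, fun x hx => hc x (Finset.mem_univ _) (Finset.mem_univ _) hx⟩
  intro s
  induction s using Finset.induction with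
  | empty => exact ⟨fun _ => 0, by simp⟩
  | @insert a t ha ih =>
    obtain ⟨c, hc⟩ := ih
    -- a new point has at most two coloured neighbours, `f a` and `f⁻¹ a`
    obtain ⟨v, hv1, hv2⟩ : ∃ v : Fin 3, v ≠ c (f a) ∧ v ≠ c (f.symm a) :=
      (by decide : ∀ p q : Fin 3, ∃ v, v ≠ p ∧ v ≠ q) _ _
    refine ⟨Function.update c a v, fun x hx hfx hne => ?_⟩
    rcases Finset.mem_insert.mp hx with rfl | hxt
    · rw [Function.update_of_ne hne, Function.update_self]
      exact hv1.symm
    · have hxa : x ≠ a := fun h => ha (h ▸ hxt)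
      by_cases hfa : f x = a
      · rw [hfa, Function.update_self, Function.update_of_ne hxa, f.eq_symm_apply.2 hfa]
        exact hv2
      · rw [Function.update_of_ne hfa, Function.update_of_ne hxa]
        exact hc x hxt ((Finset.mem_insert.mp hfx).resolve_left hfa) hne

namespace SoficApprox

variable {Γ : Type u} [Group Γ] {S : Finset Γ} (A : SoficApprox Γ S)

theorem perm_mk (g : Γ) (i : ℕ) (x : A.X i) : A.perm g ⟨i, x⟩ = ⟨i, A.sigma i g x⟩ := rfl

theorem eventually_mem_F (g : Γ) : ∀ᶠ i in Filter.atTop, g ∈ A.F i :=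
  let ⟨N, hN⟩ := A.F_exhausts g
  Filter.eventually_atTop.2 ⟨N, fun _ hi => A.F_mono hi hN⟩

theorem finite_setOf_fst_lt (N : ℕ) : {p : A.Total | p.1 < N}.Finite :=
  (Set.finite_Iio N).preimage' fun i _ => by
    have := A.finX i
    exact Set.range_sigmaMk i ▸ Set.finite_range _

theorem tendsto_fst_atTop {η : Ultrafilter A.Total} (hη : ∀ p, η ≠ pure p) :
    Filter.Tendsto Sigma.fst (η : Filter A.Total) Filter.atTop := by
  refine Filter.tendsto_atTop.2 fun N => ?_
  by_contra h
  obtain ⟨p, -, hp⟩ := Ultrafilter.eq_pure_of_finite_mem (A.finite_setOf_fst_lt N) <|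
    Filter.mem_of_superset (Ultrafilter.compl_mem_iff_notMem.2 h) fun p hp =>
      (lt_of_not_ge hp : p.1 < N)
  exact hη p hp

theorem eventually_mem_F_fst {η : Ultrafilter A.Total} (hη : η ∈ A.bdY) (g : Γ) :
    ∀ᶠ p in (η : Filter A.Total), g ∈ A.F p.1 :=
  (A.tendsto_fst_atTop hη.1).eventually (A.eventually_mem_F g)

theorem sigma_one_apply {i : ℕ} {y : A.X i} (hy : y ∈ A.Y i) : A.sigma i 1 y = y :=
  (A.sigma i 1).injective <| by
    simpa using A.sigma_mul i 1 (A.F_one i) 1 (A.F_one i) y hy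

theorem continuous_permBar (g : Γ) : Continuous (A.permBar g) :=
  Ultrafilter.continuous_map _

theorem permBar_one {η : Ultrafilter A.Total} (hη : A.Ytot ∈ η) : A.permBar 1 η = η :=
  (Ultrafilter.map_congr (g := id) (Filter.mem_of_superset hη fun _ hp =>
    congrArg (Sigma.mk _) (A.sigma_one_apply hp))).trans η.map_id

theorem permBar_permBar {η : Ultrafilter A.Total} (hη : η ∈ A.bdY) (g h : Γ) :
    A.permBar g (A.permBar h η) = A.permBar (g * h) η := by
  rw [permBar, permBar, Ultrafilter.map_map]
  refine Ultrafilter.map_congr ?_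
  filter_upwards [hη.2, A.eventually_mem_F_fst hη g, A.eventually_mem_F_fst hη h]
    with ⟨i, x⟩ hx hg hh
  exact congrArg (Sigma.mk i) (A.sigma_mul i g hg h hh x hx)

theorem core_subset_bdY : A.core ⊆ A.bdY := fun η hη => by
  obtain ⟨ζ, hζ, rfl⟩ := Set.mem_iInter.1 hη 1
  rwa [A.permBar_one hζ.2]

theorem permBar_mem_core {η : Ultrafilter A.Total} (hη : η ∈ A.core) (g : Γ) :
    A.permBar g η ∈ A.core :=
  Set.mem_iInter.2 fun h => by
    obtain ⟨ζ, hζ, rfl⟩ := Set.mem_iInter.1 hη (g⁻¹ * h)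
    exact ⟨ζ, hζ, by rw [A.permBar_permBar hζ, mul_inv_cancel_left]⟩

theorem isClosed_bdY : IsClosed A.bdY := by
  have h : A.bdY = (⋂ p : A.Total, {η | ({p}ᶜ : Set A.Total) ∈ η}) ∩ {η | A.Ytot ∈ η} := by
    ext η
    simp [bdY, Ultrafilter.compl_mem_iff_notMem, Ultrafilter.eq_pure_iff_singleton_mem, and_comm]
  rw [h]
  exact (isClosed_iInter fun p => ultrafilter_isClosed_basic _).inter
    (ultrafilter_isClosed_basic _)

theorem isClosed_core : IsClosed A.core :=
  isClosed_iInter fun _ =>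
    (A.isClosed_bdY.isCompact.image (A.continuous_permBar _)).isClosed

theorem exists_coloring (g : Γ) :
    ∃ c : A.Total → Fin 3, ∀ p, A.perm g p ≠ p → c (A.perm g p) ≠ c p := by
  choose c hc using fun i => (have := A.finX i; (A.sigma i g).exists_coloring_fin_three)
  exact ⟨fun p => c p.1 p.2, fun ⟨i, x⟩ hp => hc i x fun h => hp (congrArg (Sigma.mk i) h)⟩

theorem permBar_ne_self {η : Ultrafilter A.Total} (hη : η ∈ A.bdY) {g : Γ} (hg : g ≠ 1) :
    A.permBar g η ≠ η := by
  obtain ⟨c, hc⟩ := A.exists_coloring g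
  refine Ultrafilter.map_ne_self_of_coloring c ?_
  filter_upwards [hη.2, A.eventually_mem_F_fst hη g] with ⟨i, x⟩ hx hgi
  exact hc _ fun h => A.sigma_free i g hgi hg x hx (Sigma.mk.inj_iff.1 h).2.eq

theorem permBar_left_injective {η : Ultrafilter A.Total} (hη : η ∈ A.bdY) :
    Function.Injective fun g => A.permBar g η := by
  intro g h (hgh : A.permBar g η = A.permBar h η)
  have : A.permBar (h⁻¹ * g) η = η := by
    rw [← A.permBar_permBar hη, hgh, A.permBar_permBar hη, inv_mul_cancel, A.permBar_one hη.2]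
  by_contra hne
  exact A.permBar_ne_self hη (fun h1 => hne (inv_mul_eq_one.1 h1).symm) this

theorem eq_and_eq_of_prodMk_permBar_eq {η η' : Ultrafilter A.Total} (hη : η ∈ A.core)
    {g g' : Γ} (h : (η, A.permBar g η) = (η', A.permBar g' η')) : η = η' ∧ g = g' := by
  obtain ⟨rfl, hg⟩ := Prod.mk.inj h
  exact ⟨rfl, A.permBar_left_injective (A.core_subset_bdY hη) hg⟩

end SoficApprox

section Words

variable {Γ : Type u} [Group Γ] {S : Finset Γ}

/-- Words in `S^{±1}` are lists of signed letters; `(s, false)` stands for `s⁻¹`. -/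
def signedLetter (a : ↥S × Bool) : Γ :=
  bif a.2 then (a.1 : Γ) else (a.1 : Γ)⁻¹

def wordEval (l : List (↥S × Bool)) : Γ :=
  (l.map signedLetter).prod

theorem wordLength_wordEval_le (hSsymm : ∀ s ∈ S, s⁻¹ ∈ S) (l : List (↥S × Bool)) :
    wordLength S (wordEval l) ≤ l.length :=
  Nat.sInf_le ⟨_, fun x hx => by
    obtain ⟨⟨s, b⟩, -, rfl⟩ := List.mem_map.1 hx
    cases b
    exacts [hSsymm _ s.2, s.2], List.length_map _, rfl⟩

theorem exists_wordEval_eq (hSsymm : ∀ s ∈ S, s⁻¹ ∈ S)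
    (hSgen : Subgroup.closure (S : Set Γ) = ⊤) (g : Γ) :
    ∃ l : List (↥S × Bool), l.length = wordLength S g ∧ wordEval l = g := by
  have hmon : g ∈ Submonoid.closure (S : Set Γ) := by
    have hinv : (S : Set Γ)⁻¹ ⊆ S := fun x hx => inv_inv x ▸ hSsymm _ hx
    rw [← Set.union_eq_left.2 hinv, ← Subgroup.closure_toSubmonoid, hSgen]
    trivial
  obtain ⟨l₀, hl₀S, hl₀⟩ := Submonoid.exists_list_of_mem_closure hmon
  obtain ⟨l, hlS, hlen, rfl⟩ := Nat.sInf_mem (⟨_, l₀, hl₀S, rfl, hl₀⟩ :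
    {n | ∃ l : List Γ, (∀ x ∈ l, x ∈ S) ∧ l.length = n ∧ l.prod = g}.Nonempty)
  refine ⟨l.pmap (fun x hx => (⟨x, hx⟩, true)) hlS, (List.length_pmap).trans hlen, ?_⟩
  simp [wordEval, signedLetter, List.map_pmap]

theorem finite_setOf_wordLength_le (hSsymm : ∀ s ∈ S, s⁻¹ ∈ S)
    (hSgen : Subgroup.closure (S : Set Γ) = ⊤) (n : ℕ) :
    {g : Γ | wordLength S g ≤ n}.Finite :=
  ((List.finite_length_le _ n).image wordEval).subset fun g hg => by
    obtain ⟨l, hlen, rfl⟩ := exists_wordEval_eq hSsymm hSgen g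
    exact ⟨l, hlen.trans_le hg, rfl⟩

end Words

namespace SoficApprox

variable {Γ : Type u} [Group Γ] {S : Finset Γ} (A : SoficApprox Γ S)
  {d : A.Total → A.Total → ℝ}

/-- Using `σ(s)⁻¹` rather than `σ(s⁻¹)`, which agree only on most of `X`, makes every letter
move each point along at most one edge of the graph. -/
def letterPerm (a : ↥S × Bool) : Equiv.Perm A.Total :=
  bif a.2 then A.perm a.1 else (A.perm a.1)⁻¹

def wordPerm (l : List (↥S × Bool)) : Equiv.Perm A.Total :=
  (l.map A.letterPerm).prod

theorem exists_letterPerm_of_adj {i : ℕ} {x y : A.X i} (h : (A.graph i).Adj x y) :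
    ∃ a : ↥S × Bool, A.letterPerm a ⟨i, x⟩ = ⟨i, y⟩ := by
  obtain ⟨-, s, hs, hxy | hyx⟩ := h
  · exact ⟨(⟨s, hs⟩, true), by rw [letterPerm, cond_true, perm_mk, hxy]⟩
  · exact ⟨(⟨s, hs⟩, false), Equiv.Perm.inv_eq_iff_eq.2 (by rw [perm_mk, hyx])⟩

theorem exists_wordPerm_of_walk {i : ℕ} {x y : A.X i} (p : (A.graph i).Walk x y) :
    ∃ l : List (↥S × Bool), l.length = p.length ∧ A.wordPerm l ⟨i, x⟩ = ⟨i, y⟩ := by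
  induction p with
  | nil => exact ⟨[], rfl, rfl⟩
  | cons hadj _ ih =>
    obtain ⟨l, hlen, hl⟩ := ih
    obtain ⟨a, ha⟩ := A.exists_letterPerm_of_adj hadj
    exact ⟨l ++ [a], by simp [hlen], by simp [wordPerm, ha, ← hl]⟩

theorem map_letterPerm_eq_permBar {ζ : Ultrafilter A.Total} (hζ : ζ ∈ A.bdY) (a : ↥S × Bool) :
    ζ.map (A.letterPerm a) = A.permBar (signedLetter a) ζ := by
  obtain ⟨s, _ | _⟩ := a
  · calc ζ.map ⇑(A.perm s)⁻¹
        = (A.permBar s (A.permBar (s : Γ)⁻¹ ζ)).map ⇑(A.perm s)⁻¹ := by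
          rw [A.permBar_permBar hζ, mul_inv_cancel, A.permBar_one hζ.2]
      _ = A.permBar (s : Γ)⁻¹ ζ := by
          rw [permBar, Ultrafilter.map_map, ← Equiv.Perm.coe_mul, inv_mul_cancel,
            Equiv.Perm.coe_one, Ultrafilter.map_id]
  · rfl

theorem map_wordPerm_eq_permBar {η : Ultrafilter A.Total} (hη : η ∈ A.core)
    (l : List (↥S × Bool)) : η.map (A.wordPerm l) = A.permBar (wordEval l) η := by
  induction l with
  | nil => exact (A.permBar_one (A.core_subset_bdY hη).2).symm
  | cons a l ih =>
    have hζ := A.core_subset_bdY (A.permBar_mem_core hη (wordEval l))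
    rw [wordPerm, List.map_cons, List.prod_cons, Equiv.Perm.coe_mul, ← Ultrafilter.map_map]
    rw [← wordPerm, ih, A.map_letterPerm_eq_permBar hζ, A.permBar_permBar (A.core_subset_bdY hη)]
    rfl

theorem dist_perm_le_one (hd : A.Admissible d) {s : Γ} (hs : s ∈ S) (p : A.Total) :
    d p (A.perm s p) ≤ 1 := by
  obtain ⟨i, x⟩ := p
  rw [perm_mk, hd.2.2.2.2.1]
  by_cases h : A.sigma i s x = x
  · simp [h]
  · exact_mod_cast ((A.graph i).dist_eq_one_iff_adj.2 ⟨fun e => h e.symm, s, hs, Or.inl rfl⟩).le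

theorem dist_letterPerm_le_one (hd : A.Admissible d) (a : ↥S × Bool) (p : A.Total) :
    d p (A.letterPerm a p) ≤ 1 := by
  obtain ⟨⟨s, hs⟩, _ | _⟩ := a
  · simpa [letterPerm, hd.1 p] using A.dist_perm_le_one hd hs ((A.perm s)⁻¹ p)
  · exact A.dist_perm_le_one hd hs p

theorem dist_wordPerm_le (hd : A.Admissible d) (l : List (↥S × Bool)) (p : A.Total) :
    d p (A.wordPerm l p) ≤ l.length := by
  induction l with
  | nil => simp [wordPerm, (hd.2.2.1 p p).2 rfl]
  | cons a l ih =>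
    calc d p (A.wordPerm (a :: l) p)
        ≤ d p (A.wordPerm l p) + d (A.wordPerm l p) (A.letterPerm a (A.wordPerm l p)) :=
          hd.2.1 _ _ _
      _ ≤ l.length + 1 := add_le_add ih (A.dist_letterPerm_le_one hd a _)
      _ = (a :: l).length := by push_cast [List.length_cons]; ring

theorem mem_closure_ER_of_length_le (hd : A.Admissible d) (η : Ultrafilter A.Total)
    {n : ℕ} {l : List (↥S × Bool)} (hl : l.length ≤ n) :
    (η, η.map (A.wordPerm l)) ∈ closure (A.ER d n) :=
  closure_mono (by
      rintro _ ⟨p, rfl⟩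
      exact ⟨p, _, (A.dist_wordPerm_le hd l p).trans (by exact_mod_cast hl), rfl⟩)
    (η.prodMk_map_mem_closure_range (A.wordPerm l))

/-- Pairs in `E_n` either lie in the same `X i`, where they are joined by a word of length `≤ n`,
or lie in two of finitely many `X i`. Both kinds form closed sets of `βX × βX`. -/
theorem closure_ER_subset (hconn : ∀ i, (A.graph i).Connected) (hd : A.Admissible d) (n : ℕ) :
    ∃ N : ℕ, closure (A.ER d n) ⊆
      Prod.fst ⁻¹' (pure '' {p : A.Total | p.1 < N}) ∪
        ⋃ l ∈ {l : List (↥S × Bool) | l.length ≤ n}, {q | q.2 = q.1.map (A.wordPerm l)} := by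
  obtain ⟨N, hN⟩ := hd.2.2.2.2.2 n
  refine ⟨N, closure_minimal ?_ ?_⟩
  · rintro _ ⟨⟨i, x⟩, ⟨j, y⟩, hxy, rfl⟩
    by_cases hij : i = j
    · subst hij
      obtain ⟨p, hp⟩ := ((hconn i) x y).exists_walk_length_eq_dist
      obtain ⟨l, hlen, hl⟩ := A.exists_wordPerm_of_walk p
      have hdist : (A.graph i).dist x y ≤ n := by
        exact_mod_cast (hd.2.2.2.2.1 i x y).symm.trans_le hxy
      refine Or.inr (Set.mem_biUnion (hlen.trans hp |>.trans_le hdist) ?_)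
      simp [Ultrafilter.map_pure, hl]
    · refine Or.inl ⟨⟨i, x⟩, ?_, rfl⟩
      by_contra hi
      exact (hN i j hij (by simp at hi; omega) x y).not_ge hxy
  · refine (((A.finite_setOf_fst_lt N).image _).isClosed.preimage continuous_fst).union
      ((List.finite_length_le _ n).isClosed_biUnion fun l _ =>
        isClosed_eq continuous_snd ((Ultrafilter.continuous_map _).comp continuous_fst))

theorem mem_closure_ER_iff (hSsymm : ∀ s ∈ S, s⁻¹ ∈ S)
    (hSgen : Subgroup.closure (S : Set Γ) = ⊤) (hconn : ∀ i, (A.graph i).Connected)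
    (hd : A.Admissible d) {n : ℕ} {η ξ : Ultrafilter A.Total} (hη : η ∈ A.core) :
    (η, ξ) ∈ closure (A.ER d n) ↔ ∃ g : Γ, wordLength S g ≤ n ∧ A.permBar g η = ξ := by
  constructor
  · intro hηξ
    obtain ⟨N, hN⟩ := A.closure_ER_subset hconn hd n
    rcases hN hηξ with ⟨p, -, hp⟩ | hword
    · exact absurd hp.symm ((A.core_subset_bdY hη).1 p)
    · obtain ⟨l, hl, hξ⟩ := Set.mem_iUnion₂.1 hword
      exact ⟨wordEval l, (wordLength_wordEval_le hSsymm l).trans hl,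
        (A.map_wordPerm_eq_permBar hη l).symm.trans hξ.symm⟩
  · rintro ⟨g, hg, rfl⟩
    obtain ⟨l, hlen, rfl⟩ := exists_wordEval_eq hSsymm hSgen g
    rw [← A.map_wordPerm_eq_permBar hη]
    exact A.mem_closure_ER_of_length_le hd η (hlen.trans_le hg)

end SoficApprox

open SoficApprox in
/-- **The sofic coarse boundary groupoid over the core is `Z ⋊ Γ`.**
The map `Θ(η, g) = (η, σ̄(g)(η))` on `Z × Γ` is injective, and for every `n` its
restriction to `Z × {g : |g|_S ≤ n}` (with `Z` carrying the subspace topology and `Γ` the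
discrete topology) is a homeomorphism onto `cl(E_n) ∩ (Z × Z)`. -/
theorem core_groupoid_homeomorphism
    {Γ : Type u} [Group Γ] [TopologicalSpace Γ] [DiscreteTopology Γ] {S : Finset Γ}
    (hSsymm : ∀ s ∈ S, s⁻¹ ∈ S)
    (hSgen : Subgroup.closure (S : Set Γ) = ⊤)
    (A : SoficApprox Γ S)
    (hconn : ∀ i, (A.graph i).Connected)
    (d : A.Total → A.Total → ℝ) (hd : A.Admissible d) :
    Function.Injective
      (fun p : ↥A.core × Γ =>
        ((p.1 : Ultrafilter A.Total), A.permBar p.2 (p.1 : Ultrafilter A.Total))) ∧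
    ∀ n : ℕ,
      ∃ h : (↥A.core × {g : Γ // wordLength S g ≤ n}) ≃ₜ
          ↥(closure (A.ER d (n : ℝ)) ∩ (A.core ×ˢ A.core)),
        ∀ p : ↥A.core × {g : Γ // wordLength S g ≤ n},
          (h p : Ultrafilter A.Total × Ultrafilter A.Total) =
            ((p.1 : Ultrafilter A.Total), A.permBar (p.2 : Γ) (p.1 : Ultrafilter A.Total)) := by
  refine ⟨fun ⟨η, g⟩ ⟨η', g'⟩ h => ?_, fun n => ?_⟩
  · obtain ⟨hη, rfl⟩ := A.eq_and_eq_of_prodMk_permBar_eq η.2 h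
    exact Prod.ext (Subtype.ext hη) rfl
  let Θ : ↥A.core × {g : Γ // wordLength S g ≤ n} →
      ↥(closure (A.ER d (n : ℝ)) ∩ (A.core ×ˢ A.core)) := fun p =>
    ⟨(p.1, A.permBar p.2 p.1),
      (A.mem_closure_ER_iff hSsymm hSgen hconn hd p.1.2).2 ⟨p.2, p.2.2, rfl⟩,
      p.1.2, A.permBar_mem_core p.1.2 p.2⟩
  have hΘ : Function.Bijective Θ := by
    refine ⟨fun p q h => ?_, ?_⟩
    · obtain ⟨hη, hg⟩ := A.eq_and_eq_of_prodMk_permBar_eq p.1.2 (congrArg Subtype.val h)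
      exact Prod.ext (Subtype.ext hη) (Subtype.ext hg)
    · rintro ⟨⟨η, ξ⟩, hηξ, (hη : η ∈ A.core), -⟩
      obtain ⟨g, hg, rfl⟩ := (A.mem_closure_ER_iff hSsymm hSgen hconn hd hη).1 hηξ
      exact ⟨(⟨η, hη⟩, ⟨g, hg⟩), rfl⟩
  have : CompactSpace A.core := isCompact_iff_compactSpace.1 A.isClosed_core.isCompact
  have : Finite {g : Γ // wordLength S g ≤ n} :=
    (finite_setOf_wordLength_le hSsymm hSgen n).to_subtype
  have hcont : Continuous Θ := by
    refine (continuous_subtype_val.fst'.prodMk ?_).subtype_mk _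
    exact continuous_prod_of_discrete_right.2 fun g =>
      (A.continuous_permBar g).comp continuous_subtype_val
  exact ⟨hcont.homeoOfEquivCompactToT2 (f := Equiv.ofBijective Θ hΘ), fun _ => rfl⟩
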